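/- arXiv:1502.04689 — 2 statements merged into one kernel-verified Lean document; each statement's English description precedes it below -/
import Mathlib

section
/- The t-product of tensors is associative: for A ∈ ℝ^{n₁×n₂×n₃}, B ∈ ℝ^{n₂×n₄×n₃}, C ∈ ℝ^{n₄×n₅×n₃}, (A * B) * C = A * (B * C). -/
/-- Circular convolution of length-`n₃` tubes. -/
def cconv {n : ℕ} [NeZero n] (x y : ZMod n → ℝ) : ZMod n → ℝ :=
  fun k => ∑ j : ZMod n, x j * y (k - j)

/-- The t-product of third-order tensors: the `(i,j)` tube of `A * B` is
`Σ_k A(i,k,:) ⋆ B(k,j,:)`. -/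
def tProd {n₁ n₂ n₄ n₃ : ℕ} [NeZero n₃]
    (A : Fin n₁ → Fin n₂ → ZMod n₃ → ℝ) (B : Fin n₂ → Fin n₄ → ZMod n₃ → ℝ) :
    Fin n₁ → Fin n₄ → ZMod n₃ → ℝ :=
  fun i j t => ∑ k : Fin n₂, cconv (A i k) (B k j) t

/-- The t-product of tensors is associative. -/
theorem tprod_assoc {n₁ n₂ n₄ n₅ n₃ : ℕ} [NeZero n₃]
    (A : Fin n₁ → Fin n₂ → ZMod n₃ → ℝ) (B : Fin n₂ → Fin n₄ → ZMod n₃ → ℝ)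
    (C : Fin n₄ → Fin n₅ → ZMod n₃ → ℝ) :
    tProd (tProd A B) C = tProd A (tProd B C) := by
  funext i j t
  simp only [tProd, cconv, Finset.sum_mul, Finset.mul_sum]
  conv_lhs => enter [2, l]; rw [Finset.sum_comm]
  conv_lhs => rw [Finset.sum_comm]
  conv_lhs => enter [2, k, 2, l]; rw [Finset.sum_comm]
  conv_lhs => enter [2, k]; rw [Finset.sum_comm]
  refine Finset.sum_congr rfl fun k _ => ?_
  refine Finset.sum_congr rfl fun u _ => ?_
  refine Finset.sum_congr rfl fun l _ => ?_
  refine Fintype.sum_equiv (Equiv.subRight u) _ _ fun v => ?_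
  simp [mul_assoc, sub_sub]
end

section
/- For a third-order real tensor A, the block-diagonalized DFT of the tensor transpose equals the conjugate transpose of the block-diagonalized DFT of A: blockdiag(fft₃(Aᵀ)) = blockdiag(fft₃(A))^H. -/
/-- Unnormalized DFT along a tube. -/
noncomputable def dft {n : ℕ} [NeZero n] (x : ZMod n → ℂ) : ZMod n → ℂ :=
  fun m => ∑ k : ZMod n, x k * Complex.exp (-2 * Real.pi * Complex.I / n) ^ (m.val * k.val)

/-- `fft₃`: DFT along the third index of a tensor. -/
noncomputable def fft3 {n₁ n₂ n₃ : ℕ} [NeZero n₃] (A : Fin n₁ → Fin n₂ → ZMod n₃ → ℂ) :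
    Fin n₁ → Fin n₂ → ZMod n₃ → ℂ :=
  fun i j => dft (A i j)

/-- Block-diagonal matrix whose `k`-th diagonal block is the `k`-th frontal slice. -/
noncomputable def blockdiag {n₁ n₂ n₃ : ℕ} [NeZero n₃] (A : Fin n₁ → Fin n₂ → ZMod n₃ → ℂ) :
    Matrix (Fin n₁ × ZMod n₃) (Fin n₂ × ZMod n₃) ℂ :=
  fun p q => if p.2 = q.2 then A p.1 q.1 p.2 else 0

/-- Tensor transpose: transpose each frontal slice and reverse the order of frontal
slices `2` through `n₃`; with `ZMod n₃` indexing, `(Aᵀ)(j,i,k) = A(i,j,-k)`. -/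
def tTranspose {n₁ n₂ n₃ : ℕ} [NeZero n₃] (A : Fin n₁ → Fin n₂ → ZMod n₃ → ℝ) :
    Fin n₂ → Fin n₁ → ZMod n₃ → ℝ :=
  fun j i k => A i j (-k)

/-! The twiddle factor `ω = exp (-2πi/n)` is an `n`-th root of unity on the unit circle, so
`ω ^ (m * (-k)) = conj (ω ^ (m * k))`: reversing a tube modulo `n` and conjugating its entries
conjugates its DFT. Real entries are their own conjugates, and taking the conjugate transpose
of a block-diagonal matrix transposes and conjugates each block. -/

lemma pow_exp_neg_two_pi_I_div_self (n : ℕ) [NeZero n] :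
    Complex.exp (-2 * Real.pi * Complex.I / n) ^ n = 1 := by
  have hζ := Complex.isPrimitiveRoot_exp n (NeZero.ne n)
  rw [neg_mul, neg_mul, neg_div, Complex.exp_neg, inv_pow, hζ.pow_eq_one, inv_one]

lemma pow_val_mul_neg_val_eq_conj {n : ℕ} [NeZero n] {ζ : ℂ} (hζ : ζ ^ n = 1) (m k : ZMod n) :
    ζ ^ (m.val * (-k).val) = starRingEnd ℂ (ζ ^ (m.val * k.val)) := by
  have hnorm : ‖ζ ^ (m.val * k.val)‖ = 1 := by
    rw [norm_pow, Complex.norm_eq_one_of_pow_eq_one hζ (NeZero.ne n), one_pow]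
  have hdvd : n ∣ (-k).val + k.val := by
    rw [← ZMod.natCast_eq_zero_iff]
    push_cast [ZMod.natCast_zmod_val]
    exact neg_add_cancel k
  obtain ⟨c, hc⟩ := hdvd
  rw [← Complex.inv_eq_conj hnorm]
  refine eq_inv_of_mul_eq_one_left ?_
  rw [← pow_add, ← mul_add, hc, mul_left_comm, pow_mul, hζ, one_pow]

theorem dft_conj_comp_neg {n : ℕ} [NeZero n] (x : ZMod n → ℂ) (m : ZMod n) :
    dft (fun k => starRingEnd ℂ (x (-k))) m = starRingEnd ℂ (dft x m) := by
  rw [dft, dft, map_sum, ← Equiv.sum_comp (Equiv.neg (ZMod n))]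
  refine Finset.sum_congr rfl fun k _ => ?_
  rw [Equiv.neg_apply, neg_neg, map_mul,
    pow_val_mul_neg_val_eq_conj (pow_exp_neg_two_pi_I_div_self n)]

theorem blockdiag_conjTranspose {n₁ n₂ n₃ : ℕ} [NeZero n₃] (A : Fin n₁ → Fin n₂ → ZMod n₃ → ℂ) :
    (blockdiag A).conjTranspose = blockdiag (fun j i k => starRingEnd ℂ (A i j k)) := by
  ext p q
  rw [Matrix.conjTranspose_apply, blockdiag, blockdiag]
  by_cases h : p.2 = q.2
  · rw [if_pos h.symm, if_pos h, h]
    rfl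
  · rw [if_neg (Ne.symm h), if_neg h, star_zero]

/-- For a real tensor `A`, the block-diagonalized DFT of the tensor transpose equals the
conjugate transpose of the block-diagonalized DFT of `A`. -/
theorem blockdiag_fft3_tTranspose {n₁ n₂ n₃ : ℕ} [NeZero n₃]
    (A : Fin n₁ → Fin n₂ → ZMod n₃ → ℝ) :
    blockdiag (fft3 (fun i j k => ((tTranspose A) i j k : ℂ))) =
      Matrix.conjTranspose (blockdiag (fft3 (fun i j k => ((A i j k : ℂ))))) := by
  rw [blockdiag_conjTranspose]
  congr
  ext j i m
  simp only [fft3, tTranspose, ← dft_conj_comp_neg, Complex.conj_ofReal]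
end
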